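/- arXiv:1810.08824 — 2 statements merged into one kernel-verified Lean document; each statement's English description precedes it below -/
import Mathlib

section
/- Let u : [0, a] → ℂ be continuously differentiable on [0, a] with a > 0, and let 0 < δ ≤ a. Then δ |u(0)|² ≤ ‖u‖²_{L²(0,δ)} + 2δ ‖u‖_{L²(0,δ)} ‖u'‖_{L²(0,δ)}. -/
open Real MeasureTheory intervalIntegral

/-!
By the fundamental theorem of calculus, `‖u 0‖² = ‖u x‖² - ∫₀ˣ 2⟪u, u'⟫`, so
`‖u 0‖² ≤ ‖u x‖² + 2 ∫₀^δ ‖u‖ ‖u'‖` for every `x ∈ [0, δ]`. Averaging over `x ∈ [0, δ]` and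
bounding `∫₀^δ ‖u‖ ‖u'‖` by Cauchy–Schwarz gives the estimate.
-/

theorem MeasureTheory.integral_norm_mul_norm_le_sqrt_mul_sqrt {α E : Type*} [MeasurableSpace α]
    {μ : Measure α} [NormedAddCommGroup E] {f g : α → E} (hf : MemLp f 2 μ) (hg : MemLp g 2 μ) :
    ∫ x, ‖f x‖ * ‖g x‖ ∂μ ≤ √(∫ x, ‖f x‖ ^ 2 ∂μ) * √(∫ x, ‖g x‖ ^ 2 ∂μ) := by
  have h := integral_mul_norm_le_Lp_mul_Lq (p := 2) (q := 2) HolderConjugate.two_two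
    (by simpa using hf) (by simpa using hg)
  simpa only [Real.rpow_two, Real.sqrt_eq_rpow, one_div] using h

theorem ContinuousOn.memLp_restrict_Icc {E : Type*} [NormedAddCommGroup E] {f : ℝ → E}
    {a b : ℝ} {p : ENNReal} (hf : ContinuousOn f (Set.Icc a b)) :
    MemLp f p (volume.restrict (Set.Icc a b)) := by
  obtain ⟨C, hC⟩ := isCompact_Icc.exists_bound_of_continuousOn hf
  exact .of_bound (hf.aestronglyMeasurable measurableSet_Icc) C
    ((ae_restrict_iff' measurableSet_Icc).2 (.of_forall hC))

theorem intervalIntegral.integral_norm_mul_norm_le_sqrt_mul_sqrt {E : Type*}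
    [NormedAddCommGroup E] {f g : ℝ → E} {a b : ℝ} (hab : a ≤ b)
    (hf : ContinuousOn f (Set.Icc a b)) (hg : ContinuousOn g (Set.Icc a b)) :
    ∫ x in a..b, ‖f x‖ * ‖g x‖ ≤ √(∫ x in a..b, ‖f x‖ ^ 2) * √(∫ x in a..b, ‖g x‖ ^ 2) := by
  have hμ : volume.restrict (Set.Ioc a b) ≤ volume.restrict (Set.Icc a b) :=
    Measure.restrict_mono Set.Ioc_subset_Icc_self le_rfl
  simp only [integral_of_le hab]
  exact MeasureTheory.integral_norm_mul_norm_le_sqrt_mul_sqrt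
    (hf.memLp_restrict_Icc.mono_measure hμ) (hg.memLp_restrict_Icc.mono_measure hμ)

section Trace

variable {E : Type*} [NormedAddCommGroup E] [InnerProductSpace ℝ E] {u u' : ℝ → E} {a b : ℝ}

theorem integral_two_mul_inner_eq_norm_sq_sub (hab : a ≤ b)
    (hu : ∀ x ∈ Set.Icc a b, HasDerivWithinAt u (u' x) (Set.Icc a b) x)
    (hu' : ContinuousOn u' (Set.Icc a b)) :
    ∫ x in a..b, 2 * inner ℝ (u x) (u' x) = ‖u b‖ ^ 2 - ‖u a‖ ^ 2 := by
  have hcu : ContinuousOn u (Set.Icc a b) := fun x hx => (hu x hx).continuousWithinAt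
  refine integral_eq_sub_of_hasDerivAt_of_le hab (hcu.norm.pow 2) (fun x hx => ?_) ?_
  · exact ((hu x (Set.Ioo_subset_Icc_self hx)).hasDerivAt (Icc_mem_nhds hx.1 hx.2)).norm_sq
  · exact (continuousOn_const.mul (hcu.inner hu')).intervalIntegrable_of_Icc hab

theorem norm_sq_left_le_norm_sq_add_integral
    (hu : ∀ x ∈ Set.Icc a b, HasDerivWithinAt u (u' x) (Set.Icc a b) x)
    (hu' : ContinuousOn u' (Set.Icc a b)) {x : ℝ} (hx : x ∈ Set.Icc a b) :
    ‖u a‖ ^ 2 ≤ ‖u x‖ ^ 2 + 2 * ∫ t in a..b, ‖u t‖ * ‖u' t‖ := by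
  have hcu : ContinuousOn u (Set.Icc a b) := fun x hx => (hu x hx).continuousWithinAt
  have hsub : Set.Icc a x ⊆ Set.Icc a b := Set.Icc_subset_Icc_right hx.2
  have hftc := integral_two_mul_inner_eq_norm_sq_sub hx.1
    (fun t ht => (hu t (hsub ht)).mono hsub) (hu'.mono hsub)
  have hint : IntervalIntegrable (fun t => 2 * (‖u t‖ * ‖u' t‖)) volume a b :=
    (continuousOn_const.mul (hcu.norm.mul hu'.norm)).intervalIntegrable_of_Icc (hx.1.trans hx.2)
  calc ‖u a‖ ^ 2 = ‖u x‖ ^ 2 + ∫ t in a..x, -(2 * inner ℝ (u t) (u' t)) := by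
        rw [intervalIntegral.integral_neg, hftc]; ring
    _ ≤ ‖u x‖ ^ 2 + ∫ t in a..x, 2 * (‖u t‖ * ‖u' t‖) := by
        gcongr
        refine integral_mono_on hx.1 ?_ (hint.mono_set ?_) fun t _ => ?_
        · exact (continuousOn_const.mul ((hcu.mono hsub).inner (hu'.mono hsub))).neg
            |>.intervalIntegrable_of_Icc hx.1
        · simpa [Set.uIcc_of_le hx.1, Set.uIcc_of_le (hx.1.trans hx.2)] using hsub
        · linarith [neg_abs_le (inner ℝ (u t) (u' t)), abs_real_inner_le_norm (u t) (u' t)]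
    _ ≤ ‖u x‖ ^ 2 + ∫ t in a..b, 2 * (‖u t‖ * ‖u' t‖) := by
        gcongr
        exact integral_mono_interval le_rfl hx.1 hx.2 (.of_forall fun t => by positivity) hint
    _ = ‖u x‖ ^ 2 + 2 * ∫ t in a..b, ‖u t‖ * ‖u' t‖ := by
        rw [intervalIntegral.integral_const_mul]

theorem sub_mul_norm_sq_le_integral_norm_sq_add (hab : a ≤ b)
    (hu : ∀ x ∈ Set.Icc a b, HasDerivWithinAt u (u' x) (Set.Icc a b) x)
    (hu' : ContinuousOn u' (Set.Icc a b)) :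
    (b - a) * ‖u a‖ ^ 2 ≤ (∫ x in a..b, ‖u x‖ ^ 2)
      + 2 * (b - a) * √(∫ x in a..b, ‖u x‖ ^ 2) * √(∫ x in a..b, ‖u' x‖ ^ 2) := by
  have hcu : ContinuousOn u (Set.Icc a b) := fun x hx => (hu x hx).continuousWithinAt
  have hcs := integral_norm_mul_norm_le_sqrt_mul_sqrt hab hcu hu'
  have hu2 : IntervalIntegrable (fun x => ‖u x‖ ^ 2) volume a b :=
    (hcu.norm.pow 2).intervalIntegrable_of_Icc hab
  calc (b - a) * ‖u a‖ ^ 2 = ∫ _ in a..b, ‖u a‖ ^ 2 := by simp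
    _ ≤ ∫ x in a..b, (‖u x‖ ^ 2 + 2 * ∫ t in a..b, ‖u t‖ * ‖u' t‖) :=
        integral_mono_on hab intervalIntegrable_const
          (hu2.add intervalIntegrable_const)
          fun x hx => norm_sq_left_le_norm_sq_add_integral hu hu' hx
    _ = (∫ x in a..b, ‖u x‖ ^ 2) + (b - a) * (2 * ∫ t in a..b, ‖u t‖ * ‖u' t‖) := by
        rw [integral_add hu2 intervalIntegrable_const,
          intervalIntegral.integral_const, smul_eq_mul]
    _ ≤ _ := by
        have := mul_le_mul_of_nonneg_left hcs (sub_nonneg.2 hab)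
        linarith

end Trace

theorem stmt_1_general (a δ : ℝ) (hδ : 0 < δ) (hδa : δ ≤ a)
    (u u' : ℝ → ℂ)
    (hu : ∀ x ∈ Set.Icc (0:ℝ) a, HasDerivWithinAt u (u' x) (Set.Icc (0:ℝ) a) x)
    (hu' : ContinuousOn u' (Set.Icc (0:ℝ) a)) :
    δ * ‖u 0‖^2 ≤ (∫ x in (0:ℝ)..δ, ‖u x‖^2)
      + 2 * δ * Real.sqrt (∫ x in (0:ℝ)..δ, ‖u x‖^2)
            * Real.sqrt (∫ x in (0:ℝ)..δ, ‖u' x‖^2) := by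
  have hsub : Set.Icc 0 δ ⊆ Set.Icc 0 a := Set.Icc_subset_Icc_right hδa
  simpa using sub_mul_norm_sq_le_integral_norm_sq_add hδ.le
    (fun x hx => (hu x (hsub hx)).mono hsub) (hu'.mono hsub)

theorem stmt_1 (a δ : ℝ) (ha : 0 < a) (hδ : 0 < δ) (hδa : δ ≤ a)
    (u u' : ℝ → ℂ)
    (hu : ∀ x ∈ Set.Icc (0:ℝ) a, HasDerivWithinAt u (u' x) (Set.Icc (0:ℝ) a) x)
    (hu' : ContinuousOn u' (Set.Icc (0:ℝ) a)) :
    δ * ‖u 0‖^2 ≤ (∫ x in (0:ℝ)..δ, ‖u x‖^2)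
      + 2 * δ * Real.sqrt (∫ x in (0:ℝ)..δ, ‖u x‖^2)
            * Real.sqrt (∫ x in (0:ℝ)..δ, ‖u' x‖^2) :=
  stmt_1_general a δ hδ hδa u u' hu hu'
end

section
/- Under the hypotheses d₁ d₂ < 0 and M₁₂ ≠ 0, the maximum of λ₋ over ℝ is strictly less than the minimum of λ₊ over ℝ; more precisely min_t λ₊(t) - max_t λ₋(t) = (2|M₁₂|/|d₁-d₂|)·√((d₁-d₂)² - (d₁+d₂)²) > 0. -/
/-! Write `λ₊(t) = A - t s + √((B - t r)² + m²)` with `s = d₁ + d₂`, `r = d₁ - d₂` and `m = ‖M₁₂‖`.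
The substitution `u = B - t r` turns `λ₊` into a constant plus `c u + √(u² + m²)` with `c = s / r`,
and `d₁ d₂ < 0` means `c² < 1`. Writing `c² + k² = 1`, Cauchy–Schwarz for `(k, -c)` and `(m, u)`
gives `c u + √(u² + m²) ≥ k m`, with equality at `u = -c m / k`. Since `λ₋` is `-λ₊` for `(-A, -s)`,
its maximum lies `2 k m` below the minimum of `λ₊`. -/

open Real

theorem mul_le_mul_add_sqrt_sq_add_sq {c k : ℝ} (hck : c ^ 2 + k ^ 2 = 1) (m u : ℝ) :
    k * m ≤ c * u + √(u ^ 2 + m ^ 2) := by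
  -- Lagrange's identity: `(k m - c u)² + (c m + k u)² = (c² + k²)(u² + m²)`
  have hsq : (k * m - c * u) ^ 2 ≤ u ^ 2 + m ^ 2 := by
    nlinarith [sq_nonneg (c * m + k * u)]
  linarith [le_abs_self (k * m - c * u), abs_le_sqrt hsq]

theorem mul_add_sqrt_sq_add_sq_eq {c k m : ℝ} (hck : c ^ 2 + k ^ 2 = 1) (hk : 0 < k)
    (hm : 0 ≤ m) : c * (-c * m / k) + √((-c * m / k) ^ 2 + m ^ 2) = k * m := by
  have hroot : √((-c * m / k) ^ 2 + m ^ 2) = m / k := by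
    rw [sqrt_eq_iff_eq_sq (by positivity) (by positivity)]
    field_simp
    linear_combination m ^ 2 * hck
  rw [hroot]
  field_simp
  linear_combination -m * hck

theorem exists_forall_le_sub_mul_add_sqrt (A B s r m : ℝ) (hsr : s ^ 2 < r ^ 2) (hm : 0 ≤ m) :
    ∃ t₀ : ℝ, (∀ t, A - t₀ * s + √((B - t₀ * r) ^ 2 + m ^ 2)
        ≤ A - t * s + √((B - t * r) ^ 2 + m ^ 2)) ∧
      A - t₀ * s + √((B - t₀ * r) ^ 2 + m ^ 2) = A - s * B / r + √(r ^ 2 - s ^ 2) / |r| * m := by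
  have hr : r ≠ 0 := by rintro rfl; nlinarith [sq_nonneg s]
  have hk : 0 < √(r ^ 2 - s ^ 2) / |r| := div_pos (sqrt_pos.mpr (by linarith)) (by positivity)
  have hck : (s / r) ^ 2 + (√(r ^ 2 - s ^ 2) / |r|) ^ 2 = 1 := by
    rw [div_pow, div_pow, sq_abs, sq_sqrt (by linarith)]
    field_simp
    ring
  have hsubst : ∀ t, A - t * s + √((B - t * r) ^ 2 + m ^ 2)
      = A - s * B / r + (s / r * (B - t * r) + √((B - t * r) ^ 2 + m ^ 2)) := by
    intro t; field_simp; ring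
  set u₀ := -(s / r) * m / (√(r ^ 2 - s ^ 2) / |r|)
  have hu₀ : B - (B - u₀) / r * r = u₀ := by field_simp; ring
  refine ⟨(B - u₀) / r, fun t => ?_, ?_⟩
  · rw [hsubst, hsubst, hu₀, mul_add_sqrt_sq_add_sq_eq hck hk hm]
    linarith [mul_le_mul_add_sqrt_sq_add_sq hck m (B - t * r)]
  · rw [hsubst, hu₀, mul_add_sqrt_sq_add_sq_eq hck hk hm]

theorem exists_forall_le_sub_mul_sub_sqrt (A B s r m : ℝ) (hsr : s ^ 2 < r ^ 2) (hm : 0 ≤ m) :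
    ∃ t₁ : ℝ, (∀ t, A - t * s - √((B - t * r) ^ 2 + m ^ 2)
        ≤ A - t₁ * s - √((B - t₁ * r) ^ 2 + m ^ 2)) ∧
      A - t₁ * s - √((B - t₁ * r) ^ 2 + m ^ 2) = A - s * B / r - √(r ^ 2 - s ^ 2) / |r| * m := by
  obtain ⟨t₁, hmin, hval⟩ :=
    exists_forall_le_sub_mul_add_sqrt (-A) B (-s) r m (by rwa [neg_sq]) hm
  rw [neg_sq, neg_mul, neg_div] at hval
  exact ⟨t₁, fun t => by linarith [hmin t], by linarith⟩

theorem stmt_6 (M₁₁ M₂₂ d₁ d₂ : ℝ) (M₁₂ : ℂ) (hM : M₁₂ ≠ 0) (hd : d₁ * d₂ < 0) :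
    let lp : ℝ → ℝ := fun t => (M₁₁+M₂₂)/2 - t*(d₁+d₂)
      + Real.sqrt (((M₁₁-M₂₂)/2 - t*(d₁-d₂))^2 + ‖M₁₂‖^2)
    let lm : ℝ → ℝ := fun t => (M₁₁+M₂₂)/2 - t*(d₁+d₂)
      - Real.sqrt (((M₁₁-M₂₂)/2 - t*(d₁-d₂))^2 + ‖M₁₂‖^2)
    ∃ tp tm : ℝ, (∀ t : ℝ, lp tp ≤ lp t) ∧ (∀ t : ℝ, lm t ≤ lm tm) ∧
      lm tm < lp tp ∧
      lp tp - lm tm = (2*‖M₁₂‖/|d₁-d₂|) * Real.sqrt ((d₁-d₂)^2 - (d₁+d₂)^2) ∧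
      0 < (2*‖M₁₂‖/|d₁-d₂|) * Real.sqrt ((d₁-d₂)^2 - (d₁+d₂)^2) := by
  intro lp lm
  have hsr : (d₁ + d₂) ^ 2 < (d₁ - d₂) ^ 2 := by nlinarith
  have hm : 0 < ‖M₁₂‖ := norm_pos_iff.mpr hM
  obtain ⟨tp, hmin, hp⟩ :=
    exists_forall_le_sub_mul_add_sqrt ((M₁₁+M₂₂)/2) ((M₁₁-M₂₂)/2) _ _ _ hsr hm.le
  obtain ⟨tm, hmax, htm⟩ :=
    exists_forall_le_sub_mul_sub_sqrt ((M₁₁+M₂₂)/2) ((M₁₁-M₂₂)/2) _ _ _ hsr hm.le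
  have hgap : 0 < (2*‖M₁₂‖/|d₁-d₂|) * Real.sqrt ((d₁-d₂)^2 - (d₁+d₂)^2) := by
    have hr : d₁ - d₂ ≠ 0 := by rintro h; nlinarith [sq_nonneg (d₁ + d₂)]
    exact mul_pos (by positivity) (sqrt_pos.mpr (by linarith))
  have heq : lp tp - lm tm = (2*‖M₁₂‖/|d₁-d₂|) * Real.sqrt ((d₁-d₂)^2 - (d₁+d₂)^2) := by
    change _ + _ - (_ - _) = _
    rw [hp, htm]
    ring
  exact ⟨tp, tm, hmin, hmax, by linarith, heq, hgap⟩
end
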